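/- arXiv:1909.09512 — 9 statements merged into one kernel-verified Lean document; each statement's English description precedes it below -/
import Mathlib

section
/- Let G be a finite group whose 2-Sylow subgroup is cyclic, and write |G| = m·2^k with m odd. Then G has a unique normal subgroup of order m. -/
/-!
By Burnside's transfer theorem, a cyclic Sylow subgroup for the smallest prime dividing `|G|` has a
normal complement; for the prime `2` this gives a normal subgroup `N` of order `m` and index `2 ^ k`.
Any subgroup `K` of order `m` has trivial image in `G ⧸ N`, whose order `2 ^ k` is coprime to `m`,
so `K ≤ N` and hence `K = N`.
-/

namespace Subgroup

variable {G : Type*} [Group G]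

theorem le_of_coprime_card_index {H K : Subgroup G} [H.Normal]
    (hcop : (Nat.card K).Coprime H.index) : K ≤ H :=
  relIndex_eq_one.mp <|
    Nat.eq_one_of_dvd_coprimes hcop (H.relIndex_dvd_card K) (H.relIndex_dvd_index_of_normal K)

theorem eq_of_card_eq_of_coprime_card_index [Finite G] {H K : Subgroup G} [H.Normal]
    (hcop : (Nat.card H).Coprime H.index) (hcard : Nat.card K = Nat.card H) : K = H :=
  eq_of_le_of_card_ge (le_of_coprime_card_index (hcard ▸ hcop)) hcard.ge

end Subgroup

namespace Sylow

variable {G : Type*} [Group G] [Finite G]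

theorem card_eq_pow_of_card_eq_mul_pow {p : ℕ} [Fact p.Prime] (P : Sylow p G) {m k : ℕ}
    (hm : ¬ p ∣ m) (hcard : Nat.card G = m * p ^ k) : Nat.card P = p ^ k := by
  obtain ⟨a, ha⟩ := P.2.exists_card_eq
  have hcop : (Nat.card P).Coprime m :=
    ha ▸ ((Nat.Prime.coprime_iff_not_dvd Fact.out).mpr hm).pow_left a
  exact Nat.dvd_antisymm
    (hcop.dvd_of_dvd_mul_left (hcard ▸ Subgroup.card_subgroup_dvd_card _))
    (P.pow_dvd_card_of_pow_dvd_card (hcard ▸ dvd_mul_left _ _))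

theorem exists_normal_isComplement'_of_isCyclic_two (P : Sylow 2 G) (hP : IsCyclic P) :
    ∃ N : Subgroup G, N.Normal ∧ N.IsComplement' P := by
  by_cases h2 : 2 ∣ Nat.card G
  · exact ⟨_, MonoidHom.normal_ker _, hP.isComplement' ((Nat.minFac_eq_two_iff _).mpr h2)⟩
  · have hbot : (P : Subgroup G) = ⊥ := Subgroup.eq_bot_of_card_eq _ <|
      P.2.card_eq_or_dvd.resolve_right fun h ↦ h2 (h.trans (Subgroup.card_subgroup_dvd_card _))
    exact ⟨⊤, inferInstance, hbot ▸ Subgroup.isComplement'_top_bot⟩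

end Sylow

theorem stmt_0 (G : Type*) [Group G] [Fintype G] (m k : ℕ) (hm : Odd m)
    (hcard : Nat.card G = m * 2 ^ k)
    (hcyc : ∀ S : Sylow 2 G, IsCyclic S) :
    ∃! N : Subgroup G, N.Normal ∧ Nat.card N = m := by
  obtain ⟨P⟩ : Nonempty (Sylow 2 G) := inferInstance
  obtain ⟨N, hN, hNP⟩ := P.exists_normal_isComplement'_of_isCyclic_two (hcyc P)
  have hPcard : Nat.card P = 2 ^ k :=
    P.card_eq_pow_of_card_eq_mul_pow hm.not_two_dvd_nat hcard
  have hNcard : Nat.card N = m :=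
    Nat.eq_of_mul_eq_mul_right (by positivity) (hPcard ▸ hcard ▸ hNP.card_mul_card)
  have hNindex : N.index = 2 ^ k := hPcard ▸ hNP.symm.index_eq_card
  have hcop : (Nat.card N).Coprime N.index :=
    hNcard ▸ hNindex ▸ (Nat.coprime_two_right.mpr hm).pow_right k
  refine ⟨N, ⟨hN, hNcard⟩, fun K ⟨_, hK⟩ ↦ ?_⟩
  exact Subgroup.eq_of_card_eq_of_coprime_card_index hcop (hK.trans hNcard.symm)
end

section
/- Let G be a finite group with cyclic 2-Sylow subgroup S generating a surjection onto Z/2 via the sign of the left-regular representation: the composite map G → Sym(G) → Z/2, given by left multiplication followed by the sign homomorphism, is surjective whenever |G| is even and the 2-Sylow subgroup of G is cyclic and nontrivial. -/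
/-!
Let `x` generate a Sylow 2-subgroup `S`. Left multiplication by `x` permutes `G` in cycles, the
right cosets of `S`, all of length `|S|`, which is even; their number `[G : S]` is odd. So left
multiplication by `x` is a product of an odd number of cycles of even length, hence odd.
-/

open Equiv Equiv.Perm Finset

section
variable {G : Type*} [Group G] [Fintype G] [DecidableEq G]

lemma card_support_cycleOf_mulLeft {x : G} (hx : x ≠ 1) (a : G) :
    #((Equiv.mulLeft x).cycleOf a).support = orderOf x := by
  have hfree : ∀ b : G, Equiv.mulLeft x b ≠ b := fun b h => hx (by simpa using h)
  have hc : ((Equiv.mulLeft x).cycleOf a).IsCycle := isCycle_cycleOf _ (hfree a)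
  have hca : (Equiv.mulLeft x).cycleOf a a ≠ a := by rw [cycleOf_apply_self]; exact hfree a
  rw [← hc.orderOf, orderOf_eq_orderOf_iff]
  intro n
  rw [hc.pow_eq_one_iff' hca, cycleOf_pow_apply_self, pow_mulLeft, coe_mulLeft,
    mul_eq_right]

lemma cycleType_mulLeft {x : G} (hx : x ≠ 1) :
    (Equiv.mulLeft x).cycleType = Multiset.replicate (Subgroup.zpowers x).index (orderOf x) := by
  have hlen : ∀ n ∈ (Equiv.mulLeft x).cycleType, n = orderOf x := by
    intro n hn
    obtain ⟨c, hc, rfl⟩ := Multiset.mem_map.1 hn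
    obtain ⟨a, ha⟩ := (mem_cycleFactorsFinset_iff.1 hc).1.nonempty_support
    rw [Function.comp_apply, cycle_is_cycleOf ha hc, card_support_cycleOf_mulLeft hx]
  refine Multiset.eq_replicate.2 ⟨Nat.eq_of_mul_eq_mul_right (orderOf_pos x) ?_, hlen⟩
  have hsupp : (Equiv.mulLeft x).support = univ := by
    ext b; simp [hx]
  calc Multiset.card (Equiv.mulLeft x).cycleType * orderOf x
      = (Equiv.mulLeft x).cycleType.sum := by
        rw [Multiset.eq_replicate_card.2 hlen, Multiset.sum_replicate, smul_eq_mul,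
          Multiset.card_replicate]
    _ = (Subgroup.zpowers x).index * orderOf x := by
        rw [sum_cycleType, hsupp, card_univ, ← Nat.card_eq_fintype_card,
          ← Subgroup.index_mul_card, Nat.card_zpowers]

lemma sign_mulLeft_of_even_orderOf {x : G} (hx : Even (orderOf x)) :
    sign (Equiv.mulLeft x) = (-1) ^ (Subgroup.zpowers x).index := by
  have hx1 : x ≠ 1 := by
    rintro rfl
    simp at hx
  rw [sign_of_cycleType', cycleType_mulLeft hx1, Multiset.map_replicate,
    Multiset.prod_replicate, hx.neg_one_pow]

end

lemma Sylow.exists_sign_mulLeft_eq_neg_one {G : Type*} [Group G] [Fintype G] [DecidableEq G]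
    (S : Sylow 2 G) [IsCyclic S] [Nontrivial S] : ∃ x : G, sign (Equiv.mulLeft x) = -1 := by
  obtain ⟨x, hx⟩ := (S : Subgroup G).isCyclic_iff_exists_zpowers_eq_top.1 ‹_›
  have heven : Even (orderOf x) := by
    rw [← Nat.card_zpowers, hx, even_iff_two_dvd]
    exact S.isPGroup'.card_eq_or_dvd.resolve_left Finite.one_lt_card.ne'
  have hodd : Odd (Subgroup.zpowers x).index := by
    rw [← Nat.not_even_iff_odd, even_iff_two_dvd, hx]
    exact S.not_dvd_index
  exact ⟨x, by rw [sign_mulLeft_of_even_orderOf heven, hodd.neg_one_pow]⟩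

theorem stmt_1_general (G : Type*) [Group G] [Fintype G] [DecidableEq G]
    (hcyc : ∀ S : Sylow 2 G, IsCyclic S ∧ Nontrivial S) :
    Function.Surjective (fun g : G => Equiv.Perm.sign (Equiv.mulLeft g)) := by
  obtain ⟨S⟩ : Nonempty (Sylow 2 G) := inferInstance
  obtain ⟨_, _⟩ := hcyc S
  obtain ⟨x, hx⟩ := S.exists_sign_mulLeft_eq_neg_one
  intro u
  rcases Int.units_eq_one_or u with rfl | rfl
  · exact ⟨1, by simp⟩
  · exact ⟨x, hx⟩

theorem stmt_1 (G : Type*) [Group G] [Fintype G] [DecidableEq G]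
    (heven : Even (Nat.card G))
    (hcyc : ∀ S : Sylow 2 G, IsCyclic S ∧ Nontrivial S) :
    Function.Surjective (fun g : G => Equiv.Perm.sign (Equiv.mulLeft g)) :=
  stmt_1_general G hcyc
end

section
/- Let G be a finite group with a generator g of a cyclic 2-Sylow subgroup of order 2^k with k ≥ 1. Then left multiplication by g, viewed as a permutation of G, is an odd permutation. -/
/-!
Left multiplication by `g` has no fixed points when `g ≠ 1`, and `g ^ n * x = x` only when
`g ^ n = 1`, so it splits `G` into `|G| / ord g` cycles, all of length `ord g`. Its sign is
therefore `(-(-1) ^ ord g) ^ (|G| / ord g)`. For `ord g = 2 ^ k` with `k ≥ 1` the cycles have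
even length, and their number `|G| / 2 ^ k` is the index of a Sylow 2-subgroup, which is odd.
-/

namespace Equiv.Perm

variable {G : Type*} [Group G]

theorem mulLeft_pow (g : G) (n : ℕ) : Equiv.mulLeft g ^ n = Equiv.mulLeft (g ^ n) :=
  (map_pow (MulAction.toPermHom G G) g n).symm

theorem orderOf_mulLeft (g : G) : orderOf (Equiv.mulLeft g) = orderOf g :=
  orderOf_injective (MulAction.toPermHom G G) MulAction.toPerm_injective g

variable [Fintype G] [DecidableEq G]

theorem support_mulLeft {g : G} (hg : g ≠ 1) : (Equiv.mulLeft g).support = Finset.univ :=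
  Finset.eq_univ_of_forall fun _ => mem_support.mpr fun h => hg (mul_eq_right.mp h)

theorem eq_orderOf_of_mem_cycleType_mulLeft {g : G} {n : ℕ}
    (hn : n ∈ (Equiv.mulLeft g).cycleType) : n = orderOf g := by
  refine Nat.dvd_antisymm (orderOf_mulLeft g ▸ dvd_of_mem_cycleType hn) ?_
  rw [cycleType_def, Multiset.mem_map] at hn
  obtain ⟨c, hc, rfl⟩ := hn
  obtain ⟨x, hx⟩ := (mem_cycleFactorsFinset_iff.mp hc).1.nonempty_support
  have hfix : (Equiv.mulLeft g ^ c.support.card) x = x := by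
    rw [← pow_mod_card_support_cycleOf_self_apply, ← cycle_is_cycleOf hx hc, Nat.mod_self,
      pow_zero, one_apply]
  rw [mulLeft_pow, coe_mulLeft, mul_eq_right] at hfix
  exact orderOf_dvd_of_pow_eq_one hfix

theorem cycleType_mulLeft {g : G} (hg : g ≠ 1) :
    (Equiv.mulLeft g).cycleType =
      Multiset.replicate (Fintype.card G / orderOf g) (orderOf g) := by
  have hrep : (Equiv.mulLeft g).cycleType =
      Multiset.replicate (Equiv.mulLeft g).cycleType.card (orderOf g) :=
    Multiset.eq_replicate_card.mpr fun _ => eq_orderOf_of_mem_cycleType_mulLeft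
  have hcard : (Equiv.mulLeft g).cycleType.card * orderOf g = Fintype.card G := by
    rw [← Finset.card_univ, ← support_mulLeft hg, ← sum_cycleType, hrep, Multiset.sum_replicate,
      Multiset.card_replicate, smul_eq_mul]
  rwa [← hcard, Nat.mul_div_cancel _ (orderOf_pos g)]

theorem sign_mulLeft (g : G) :
    sign (Equiv.mulLeft g) = (-(-1) ^ orderOf g) ^ (Fintype.card G / orderOf g) := by
  rcases eq_or_ne g 1 with rfl | hg
  · simp
  rw [sign_of_cycleType', cycleType_mulLeft hg, Multiset.map_replicate, Multiset.prod_replicate]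

end Equiv.Perm

theorem stmt_2_general (G : Type*) [Group G] [Fintype G] [DecidableEq G] (k : ℕ) (hk : 1 ≤ k)
    (S : Sylow 2 G) (hS : Nat.card S = 2 ^ k) (g : G)
    (hord : orderOf g = 2 ^ k) :
    Equiv.Perm.sign (Equiv.mulLeft g) = -1 := by
  have hindex : Fintype.card G / orderOf g = (S : Subgroup G).index := by
    rw [hord, ← hS, ← Nat.card_eq_fintype_card, ← (S : Subgroup G).card_mul_index,
      Nat.mul_div_cancel_left _ Nat.card_pos]
  have hodd : Odd (S : Subgroup G).index := Nat.odd_iff.mpr (Nat.two_dvd_ne_zero.mp S.not_dvd_index)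
  have heven : Even (orderOf g) := hord ▸ (Nat.even_pow.mpr ⟨even_two, by omega⟩)
  rw [Equiv.Perm.sign_mulLeft, hindex, heven.neg_one_pow, hodd.neg_one_pow]

theorem stmt_2 (G : Type*) [Group G] [Fintype G] [DecidableEq G] (k : ℕ) (hk : 1 ≤ k)
    (S : Sylow 2 G) (hS : Nat.card S = 2 ^ k) (g : G) (hg : g ∈ S)
    (hord : orderOf g = 2 ^ k) :
    Equiv.Perm.sign (Equiv.mulLeft g) = -1 :=
  stmt_2_general G k hk S hS g hord
end

section
/- Let 1 → Z/2 → 𝒢 → G → 1 be a central extension of finite groups, with G of order m·2^k, m odd, and with a normal subgroup N of G of order m. Then the extension splits if and only if its restriction to a 2-Sylow subgroup S of G (i.e., the extension 1 → Z/2 → π⁻¹(S) → S → 1) splits. -/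
/-! A splitting `t` over `S` gives a retraction `h ↦ h * (t (π h))⁻¹` of `π⁻¹(S)` onto the
central kernel `K = ker π`. Its transfer `V : 𝒢 →* K` is `k ↦ k ^ n` on `K`, where `n = [G : S]`
is odd, hence prime to `|K| = 2`; so `V` restricts to an automorphism of `K`, `ker V` is a
complement of `K`, and `π` maps `ker V` isomorphically onto `G`. -/

open Subgroup Function

namespace Subgroup

theorem isMulCommutative_of_le_center {G : Type*} [Group G] {K : Subgroup G} (h : K ≤ center G) :
    IsMulCommutative K :=
  IsMulCommutative.of_setLike_mul_comm fun a _ _ hb ↦ mem_center_iff.mp (h hb) a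

end Subgroup

namespace MonoidHom

variable {𝒢 G : Type*} [Group 𝒢] [Group G]

theorem exists_splitting_of_bijective_comp_ker_subtype {A : Type*} [Group A] (π : 𝒢 →* G)
    (hπ : Surjective π) (V : 𝒢 →* A) (hV : Bijective (V.comp π.ker.subtype)) :
    ∃ s : G →* 𝒢, ∀ g, π (s g) = g := by
  have hinj : Injective (π.comp V.ker.subtype) := by
    refine (injective_iff_map_eq_one _).mpr fun ⟨x, hVx⟩ hπx ↦ ?_
    have : (⟨x, hπx⟩ : π.ker) = 1 := hV.1 (by simpa using hVx)
    simpa using congrArg Subtype.val this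
  have hsurj : Surjective (π.comp V.ker.subtype) := by
    intro g
    obtain ⟨x, rfl⟩ := hπ g
    obtain ⟨⟨k, hk⟩, hVk⟩ := hV.2 (V x)
    refine ⟨⟨x * k⁻¹, ?_⟩, ?_⟩
    · simp [mem_ker, ← hVk]
    · simpa [mem_ker] using hk
  let e := MulEquiv.ofBijective _ ⟨hinj, hsurj⟩
  exact ⟨V.ker.subtype.comp e.symm.toMonoidHom, e.apply_symm_apply⟩

variable (π : 𝒢 →* G) (hcentral : π.ker ≤ center 𝒢) {S : Subgroup G} (t : S →* 𝒢)
  (ht : ∀ x, π (t x) = x)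

include ht in
theorem mul_inv_splitting_mem_ker (h : S.comap π) :
    (h : 𝒢) * (t (π.subgroupComap S h))⁻¹ ∈ π.ker := by
  rw [mem_ker, map_mul, map_inv, ht]
  exact mul_inv_cancel _

def kerRetraction : S.comap π →* π.ker where
  toFun h := ⟨h * (t (π.subgroupComap S h))⁻¹, mul_inv_splitting_mem_ker π t ht h⟩
  map_one' := by ext; simp
  map_mul' a b := by
    ext
    have hb := mem_center_iff.mp (hcentral (mul_inv_splitting_mem_ker π t ht b))
    simp only [coe_mul, map_mul, mul_inv_rev]
    rw [mul_assoc, ← mul_assoc (b : 𝒢), ← hb, mul_assoc]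

theorem kerRetraction_apply_of_mem_ker (h : S.comap π) (hk : (h : 𝒢) ∈ π.ker) :
    kerRetraction π hcentral t ht h = ⟨h, hk⟩ := by
  have : π.subgroupComap S h = 1 := Subtype.ext hk
  ext; simp [kerRetraction, this]

open scoped IsMulCommutative in
include hcentral ht in
theorem exists_hom_to_ker_eq_pow_index [(S.comap π).FiniteIndex] :
    ∃ V : 𝒢 →* π.ker, ∀ k : π.ker, V k = k ^ (S.comap π).index := by
  let := isMulCommutative_of_le_center hcentral
  refine ⟨transfer (kerRetraction π hcentral t ht), fun k ↦ ?_⟩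
  have conj_eq (n : ℕ) (g : 𝒢) (_ : g⁻¹ * (k : 𝒢) ^ n * g ∈ S.comap π) :
      g⁻¹ * (k : 𝒢) ^ n * g = (k : 𝒢) ^ n := by
    rw [mem_center_iff.mp (pow_mem (hcentral k.2) n) g⁻¹, inv_mul_cancel_right]
  rw [transfer_eq_pow _ _ conj_eq, kerRetraction_apply_of_mem_ker _ _ _ _ _ (pow_mem k.2 _)]
  rfl

include hcentral in
theorem exists_splitting_iff_exists_splitting_restrict (hπ : Surjective π) [S.FiniteIndex]
    (hcop : (Nat.card π.ker).Coprime S.index) :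
    (∃ s : G →* 𝒢, ∀ g, π (s g) = g) ↔ ∃ t : S →* 𝒢, ∀ x, π (t x) = x := by
  refine ⟨fun ⟨s, hs⟩ ↦ ⟨s.comp S.subtype, fun x ↦ hs x⟩, fun ⟨t, ht⟩ ↦ ?_⟩
  have hindex : (S.comap π).index = S.index := index_comap_of_surjective S hπ
  have : (S.comap π).FiniteIndex := finiteIndex_iff.mpr (hindex ▸ FiniteIndex.index_ne_zero)
  obtain ⟨V, hV⟩ := exists_hom_to_ker_eq_pow_index π hcentral t ht
  refine exists_splitting_of_bijective_comp_ker_subtype π hπ V ?_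
  have : ⇑(V.comp π.ker.subtype) = (· ^ (S.comap π).index) := funext hV
  rw [this, hindex]
  exact Nat.Coprime.pow_left_bijective hcop

end MonoidHom

theorem stmt_6_general (𝒢 G : Type*) [Group 𝒢] [Group G] [Fintype G]
    (π : 𝒢 →* G) (hsurj : Function.Surjective π)
    (hker : Nat.card π.ker = 2) (hcentral : π.ker ≤ Subgroup.center 𝒢)
    (S : Sylow 2 G) :
    (∃ s : G →* 𝒢, ∀ g : G, π (s g) = g) ↔
      (∃ t : (S : Subgroup G) →* 𝒢, ∀ x : (S : Subgroup G), π (t x) = (x : G)) := by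
  refine π.exists_splitting_iff_exists_splitting_restrict hcentral hsurj ?_
  rw [hker]
  exact (Nat.Prime.coprime_iff_not_dvd Nat.prime_two).mpr S.not_dvd_index

theorem stmt_6 (𝒢 G : Type*) [Group 𝒢] [Group G] [Fintype 𝒢] [Fintype G]
    (π : 𝒢 →* G) (hsurj : Function.Surjective π)
    (hker : Nat.card π.ker = 2) (hcentral : π.ker ≤ Subgroup.center 𝒢)
    (m k : ℕ) (hm : Odd m) (hcard : Nat.card G = m * 2 ^ k)
    (N : Subgroup G) (hN : N.Normal) (hNm : Nat.card N = m)
    (S : Sylow 2 G) :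
    (∃ s : G →* 𝒢, ∀ g : G, π (s g) = g) ↔
      (∃ t : (S : Subgroup G) →* 𝒢, ∀ x : (S : Subgroup G), π (t x) = (x : G)) :=
  stmt_6_general 𝒢 G π hsurj hker hcentral S
end

section
/- Let π: 𝒢 → Q_{2^{k+1}} be a surjective group homomorphism with central kernel {±1} of order 2, and let x̃, ỹ ∈ 𝒢 be preimages of the standard generators x, y. If x̃^{2^{k-1}} = ±ỹ² and ỹx̃ỹ⁻¹ = ±x̃⁻¹ hold, then x̃^{2^k} = 1 (i.e., x̃ has the same order 2^k as x, not twice the order). -/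
/-!
Write `n = 2 ^ (k - 1)`; since `k ≥ 2`, `n` is even, so the central sign `ε` satisfies `ε ^ n = 1`.
Raising `ỹ x̃ ỹ⁻¹ = ±x̃⁻¹` to the `n`-th power therefore kills the sign: `ỹ` inverts `x̃ ^ n`.
On the other hand `x̃ ^ n = ±ỹ²` commutes with `ỹ`. Hence `x̃ ^ n = x̃ ^ (-n)`, i.e. `x̃ ^ (2n) = 1`.
-/

section

variable {G : Type*} [Group G]

theorem conj_pow_eq_inv_pow_of_conj_eq_central_mul_inv {c x y : G} {n : ℕ}
    (hc : c ∈ Subgroup.center G) (hcn : c ^ n = 1) (h : y * x * y⁻¹ = c * x⁻¹) :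
    y * x ^ n * y⁻¹ = (x ^ n)⁻¹ := by
  have hcx : Commute c x⁻¹ := (Subgroup.mem_center_iff.mp hc x⁻¹).symm
  rw [← conj_pow, h, hcx.mul_pow, hcn, one_mul, inv_pow]

theorem commute_central_mul_sq {c y : G} (hc : c ∈ Subgroup.center G) :
    Commute y (c * y ^ 2) :=
  Commute.mul_right (Subgroup.mem_center_iff.mp hc y) (Commute.self_pow y 2)

theorem sq_eq_one_of_commute_of_conj_eq_inv {a y : G} (hcomm : Commute y a)
    (h : y * a * y⁻¹ = a⁻¹) : a ^ 2 = 1 := by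
  rw [hcomm.mul_inv_cancel] at h
  rw [sq, mul_eq_one_iff_eq_inv]
  exact h

end

theorem stmt_9_general (𝒢 : Type*) [Group 𝒢] (k : ℕ) (hk : 2 ≤ k)
    (ε : 𝒢) (hε : ε ∈ Subgroup.center 𝒢) (hε2 : ε ^ 2 = 1)
    (x' y' : 𝒢)
    (h1 : x' ^ (2 ^ (k - 1)) = y' ^ 2 ∨ x' ^ (2 ^ (k - 1)) = ε * y' ^ 2)
    (h2 : y' * x' * y'⁻¹ = x'⁻¹ ∨ y' * x' * y'⁻¹ = ε * x'⁻¹) :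
    x' ^ (2 ^ k) = 1 := by
  have hεn : ε ^ 2 ^ (k - 1) = 1 := by
    obtain ⟨m, hm⟩ : 2 ∣ 2 ^ (k - 1) := dvd_pow_self 2 (by omega)
    rw [hm, pow_mul, hε2, one_pow]
  have hinv : y' * x' ^ 2 ^ (k - 1) * y'⁻¹ = (x' ^ 2 ^ (k - 1))⁻¹ := by
    rcases h2 with h2 | h2
    · exact conj_pow_eq_inv_pow_of_conj_eq_central_mul_inv (Subgroup.one_mem _) (one_pow _)
        (by rw [h2, one_mul])
    · exact conj_pow_eq_inv_pow_of_conj_eq_central_mul_inv hε hεn h2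
  have hcomm : Commute y' (x' ^ 2 ^ (k - 1)) := by
    rcases h1 with h1 | h1
    · rw [h1]; exact Commute.self_pow y' 2
    · rw [h1]; exact commute_central_mul_sq hε
  rw [← Nat.sub_add_cancel (by omega : 1 ≤ k), pow_succ, pow_mul]
  exact sq_eq_one_of_commute_of_conj_eq_inv hcomm hinv

theorem stmt_9 (𝒢 : Type*) [Group 𝒢] (k : ℕ) (hk : 2 ≤ k)
    (π : 𝒢 →* QuaternionGroup (2 ^ (k - 1))) (hsurj : Function.Surjective π)
    (ε : 𝒢) (hε : ε ∈ Subgroup.center 𝒢) (hε2 : ε ^ 2 = 1) (hε1 : ε ≠ 1)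
    (hker : π.ker = Subgroup.closure {ε})
    (x' y' : 𝒢) (hx : π x' = QuaternionGroup.a 1) (hy : π y' = QuaternionGroup.xa 0)
    (h1 : x' ^ (2 ^ (k - 1)) = y' ^ 2 ∨ x' ^ (2 ^ (k - 1)) = ε * y' ^ 2)
    (h2 : y' * x' * y'⁻¹ = x'⁻¹ ∨ y' * x' * y'⁻¹ = ε * x'⁻¹) :
    x' ^ (2 ^ k) = 1 :=
  stmt_9_general 𝒢 k hk ε hε hε2 x' y' h1 h2
end

section
/- Let 𝒢 be a finite group that is a semidirect product 𝒩 ⋊ 𝒮 where 𝒩 has odd order and 𝒮 is a cyclic 2-group. Then for any g ∈ 𝒮 and n ∈ 𝒩, if ngn⁻¹ ∈ 𝒮 then ngn⁻¹ = g. In particular two distinct elements of 𝒮 are never conjugate by an element of 𝒩. -/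
theorem stmt_10_general (𝒢 : Type*) [Group 𝒢]
    (𝒩 𝒮 : Subgroup 𝒢) (h𝒩 : 𝒩.Normal)
    (hdisj : 𝒩 ⊓ 𝒮 = ⊥) :
    ∀ g ∈ 𝒮, ∀ n ∈ 𝒩, n * g * n⁻¹ ∈ 𝒮 → n * g * n⁻¹ = g := by
  intro g hg n hn hconj
  have hcomm_𝒩 : n * g * n⁻¹ * g⁻¹ ∈ 𝒩 := by
    simpa only [mul_assoc] using 𝒩.mul_mem hn (h𝒩.conj_mem n⁻¹ (𝒩.inv_mem hn) g)
  have hcomm_𝒮 : n * g * n⁻¹ * g⁻¹ ∈ 𝒮 := 𝒮.mul_mem hconj (𝒮.inv_mem hg)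
  have hcomm : n * g * n⁻¹ * g⁻¹ = 1 := by
    simpa only [hdisj, Subgroup.mem_bot] using Subgroup.mem_inf.mpr ⟨hcomm_𝒩, hcomm_𝒮⟩
  exact mul_inv_eq_one.mp hcomm

theorem stmt_10 (𝒢 : Type*) [Group 𝒢] [Fintype 𝒢]
    (𝒩 𝒮 : Subgroup 𝒢) (h𝒩 : 𝒩.Normal) (hodd : Odd (Nat.card 𝒩))
    (hcyc : IsCyclic 𝒮) (k : ℕ) (h𝒮 : Nat.card 𝒮 = 2 ^ k)
    (hdisj : 𝒩 ⊓ 𝒮 = ⊥) (hprod : ∀ g : 𝒢, ∃ n ∈ 𝒩, ∃ s ∈ 𝒮, g = n * s) :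
    ∀ g ∈ 𝒮, ∀ n ∈ 𝒩, n * g * n⁻¹ ∈ 𝒮 → n * g * n⁻¹ = g :=
  stmt_10_general 𝒢 𝒩 𝒮 h𝒩 hdisj
end

section
/- Let 𝒢 be a finite group with a normal subgroup 𝒩 of odd order and a cyclic 2-Sylow subgroup 𝒮 with 𝒢 = 𝒩 ⋊ 𝒮 and |𝒮| divisible by 4. Then there exists g ∈ 𝒮 with g ≠ g⁻¹ such that g is not conjugate in 𝒢 to any element of 𝒮 other than g itself; in particular g is conjugate neither to −g nor to g⁻¹ for any central involution −1 ∈ 𝒮 \ {g}. -/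
/-!
Since `𝒮` is abelian and `𝒢 = 𝒩𝒮`, conjugating an element `x ∈ 𝒮` by `n * t` amounts to
conjugating it by `n ∈ 𝒩`. If the result lies in `𝒮`, then `n x n⁻¹ x⁻¹` lies in `𝒩 ∩ 𝒮 = 1`, so
`x` is its only conjugate in `𝒮`. A generator of `𝒮` has order `2 ^ k ≥ 4`, so it is not an
involution.
-/

theorem ne_inv_of_two_lt_orderOf {G : Type*} [Group G] {x : G} (hx : 2 < orderOf x) :
    x ≠ x⁻¹ := by
  intro hinv
  have hsq : x ^ 2 = 1 := by rw [sq, ← eq_inv_iff_mul_eq_one.mp hinv]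
  have hdvd : orderOf x ∣ 2 := orderOf_dvd_of_pow_eq_one hsq
  exact absurd (Nat.le_of_dvd two_pos hdvd) (not_le.mpr hx)

namespace Subgroup

variable {G : Type*} [Group G] {N S : Subgroup G}

theorem conj_eq_of_conj_mem_of_inf_eq_bot (hN : N.Normal) (hNS : N ⊓ S = ⊥) {n x : G}
    (hn : n ∈ N) (hx : x ∈ S) (hconj : n * x * n⁻¹ ∈ S) : n * x * n⁻¹ = x := by
  have hcommN : n * x * n⁻¹ * x⁻¹ ∈ N := by
    have : n * x * n⁻¹ * x⁻¹ = n * (x * n⁻¹ * x⁻¹) := by group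
    exact this ▸ N.mul_mem hn (hN.conj_mem _ (N.inv_mem hn) x)
  have hcommS : n * x * n⁻¹ * x⁻¹ ∈ S := S.mul_mem hconj (S.inv_mem hx)
  have hbot : n * x * n⁻¹ * x⁻¹ ∈ (⊥ : Subgroup G) := hNS ▸ ⟨hcommN, hcommS⟩
  exact mul_inv_eq_one.mp (mem_bot.mp hbot)

theorem eq_of_conj_mem_of_forall_commute (hN : N.Normal) (hNS : N ⊓ S = ⊥)
    (hprod : ∀ g : G, ∃ n ∈ N, ∃ s ∈ S, g = n * s) {x : G} (hx : x ∈ S)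
    (hcomm : ∀ t ∈ S, Commute t x) {h s : G} (hs : s ∈ S) (hconj : h * x * h⁻¹ = s) :
    s = x := by
  obtain ⟨n, hn, t, ht, rfl⟩ := hprod h
  have hconj_n : n * t * x * (n * t)⁻¹ = n * x * n⁻¹ := by
    rw [mul_inv_rev, mul_assoc n t x, (hcomm t ht).eq]
    group
  rw [hconj_n] at hconj
  subst hconj
  exact conj_eq_of_conj_mem_of_inf_eq_bot hN hNS hn hx hs

theorem commute_of_isCyclic (hS : IsCyclic S) {t x : G} (ht : t ∈ S) (hx : x ∈ S) :
    Commute t x := by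
  let := hS.commGroup
  exact congrArg Subtype.val (mul_comm (⟨t, ht⟩ : S) ⟨x, hx⟩)

end Subgroup

theorem stmt_11_general (𝒢 : Type*) [Group 𝒢]
    (𝒩 𝒮 : Subgroup 𝒢) (h𝒩 : 𝒩.Normal)
    (hcyc : IsCyclic 𝒮) (k : ℕ) (hk : 2 ≤ k) (h𝒮 : Nat.card 𝒮 = 2 ^ k)
    (hdisj : 𝒩 ⊓ 𝒮 = ⊥) (hprod : ∀ g : 𝒢, ∃ n ∈ 𝒩, ∃ s ∈ 𝒮, g = n * s) :
    ∃ g ∈ 𝒮, g ≠ g⁻¹ ∧ ∀ h : 𝒢, ∀ s ∈ 𝒮, h * g * h⁻¹ = s → s = g := by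
  obtain ⟨x, hx⟩ := hcyc.exists_ofOrder_eq_natCard
  have horder : 2 < orderOf (x : 𝒢) := by
    rw [Subgroup.orderOf_coe, hx, h𝒮]
    calc 2 < 2 ^ 2 := by norm_num
      _ ≤ 2 ^ k := Nat.pow_le_pow_right two_pos hk
  refine ⟨x, x.2, ne_inv_of_two_lt_orderOf horder, fun h s hs hconj => ?_⟩
  exact Subgroup.eq_of_conj_mem_of_forall_commute h𝒩 hdisj hprod x.2
    (fun t ht => Subgroup.commute_of_isCyclic hcyc ht x.2) hs hconj

theorem stmt_11 (𝒢 : Type*) [Group 𝒢] [Fintype 𝒢]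
    (𝒩 𝒮 : Subgroup 𝒢) (h𝒩 : 𝒩.Normal) (hodd : Odd (Nat.card 𝒩))
    (hcyc : IsCyclic 𝒮) (k : ℕ) (hk : 2 ≤ k) (h𝒮 : Nat.card 𝒮 = 2 ^ k)
    (hdisj : 𝒩 ⊓ 𝒮 = ⊥) (hprod : ∀ g : 𝒢, ∃ n ∈ 𝒩, ∃ s ∈ 𝒮, g = n * s) :
    ∃ g ∈ 𝒮, g ≠ g⁻¹ ∧ ∀ h : 𝒢, ∀ s ∈ 𝒮, h * g * h⁻¹ = s → s = g :=
  stmt_11_general 𝒢 𝒩 𝒮 h𝒩 hcyc k hk h𝒮 hdisj hprod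
end

section
/- There exists a central extension 1 → Z/2 → 𝒢 → Q₈ → 1 of the quaternion group Q₈ that does not split, but whose restriction to every cyclic subgroup of Q₈ splits. (For example, 𝒢 a semidirect product of Z/4 by Z/4.) -/
/-!
Let `𝒢 = ⟨a, b | a ^ 4 = b ^ 4 = 1, b a b⁻¹ = a⁻¹⟩ ≅ ℤ/4 ⋊ ℤ/4`. Its element `a² b²` is central of
order 2, and `a ↦ i`, `b ↦ j` identifies the quotient with `Q₈`. A section `s` would give lifts
`s i`, `s j` with equal squares since `i² = j²`; but every lift of `i` squares to `a²` and every lift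
of `j` to `b²`. On the other hand every element of `Q₈` has a lift of the same order, and that is
all a splitting over a cyclic subgroup needs.
-/

theorem exists_section_of_isCyclic {G Q : Type*} [Group G] [Group Q] (π : G →* Q)
    (H : Subgroup Q) (hH : IsCyclic H) (hlift : ∀ q, ∃ g, π g = q ∧ g ^ orderOf q = 1) :
    ∃ t : H →* G, ∀ x : H, π (t x) = x := by
  obtain ⟨h, hgen⟩ := hH.exists_generator
  obtain ⟨g, hg, hg_pow⟩ := hlift h
  have hdvd : orderOf g ∣ orderOf h := by
    rw [← Subgroup.orderOf_coe]
    exact orderOf_dvd_of_pow_eq_one hg_pow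
  refine ⟨monoidHomOfForallMemZpowers hgen hdvd, fun x => ?_⟩
  obtain ⟨k, rfl⟩ := Subgroup.mem_zpowers_iff.mp (hgen x)
  rw [map_zpow, monoidHomOfForallMemZpowers_apply_gen, map_zpow, hg, Subgroup.coe_zpow]

/-- `⟨x, y⟩` stands for `a ^ x * b ^ y`. -/
structure InvSemidirectZ4 where
  x : ZMod 4
  y : ZMod 4
  deriving DecidableEq, Fintype

namespace InvSemidirectZ4

instance : Mul InvSemidirectZ4 :=
  ⟨fun g h => ⟨g.x + (if g.y.val % 2 = 0 then h.x else -h.x), g.y + h.y⟩⟩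

instance : One InvSemidirectZ4 := ⟨⟨0, 0⟩⟩

instance : Inv InvSemidirectZ4 := ⟨fun g => ⟨if g.y.val % 2 = 0 then -g.x else g.x, -g.y⟩⟩

instance : Group InvSemidirectZ4 where
  mul_assoc := by decide
  one_mul := by decide
  mul_one := by decide
  inv_mul_cancel := by decide

def a : InvSemidirectZ4 := ⟨1, 0⟩

def b : InvSemidirectZ4 := ⟨0, 1⟩

theorem orderOf_a : orderOf a = 4 := by
  rw [orderOf_eq_iff (by norm_num)]; decide

theorem orderOf_b : orderOf b = 4 := by
  rw [orderOf_eq_iff (by norm_num)]; decide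

theorem b_mul_a_mul_b_inv : b * a * b⁻¹ = a⁻¹ := by decide

theorem card_eq : Nat.card InvSemidirectZ4 = 16 := by
  rw [Nat.card_eq_fintype_card]; rfl

theorem closure_pair_a_b_eq_top : Subgroup.closure {a, b} = ⊤ := by
  have normal_form : ∀ g : InvSemidirectZ4, g = a ^ g.x.val * b ^ g.y.val := by decide
  refine eq_top_iff.mpr fun g _ => normal_form g ▸ mul_mem ?_ ?_
  · exact pow_mem (Subgroup.subset_closure (by simp)) _
  · exact pow_mem (Subgroup.subset_closure (by simp)) _

def toQuaternion : InvSemidirectZ4 →* QuaternionGroup 2 where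
  toFun g := .a g.x * .xa 0 ^ g.y.val
  map_one' := by decide
  map_mul' := by decide

theorem card_ker_toQuaternion : Nat.card toQuaternion.ker = 2 := by
  rw [Nat.card_eq_fintype_card]; decide

theorem ker_toQuaternion_le_center : toQuaternion.ker ≤ Subgroup.center InvSemidirectZ4 := by
  have h : ∀ g, toQuaternion g = 1 → ∀ h : InvSemidirectZ4, h * g = g * h := by decide
  exact fun g hg => Subgroup.mem_center_iff.mpr (h g hg)

theorem exists_toQuaternion_eq_pow_orderOf_eq_one (q : QuaternionGroup 2) :
    ∃ g, toQuaternion g = q ∧ g ^ orderOf q = 1 := by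
  cases q with
  | a i => rw [QuaternionGroup.orderOf_a]; revert i; decide
  | xa i => rw [QuaternionGroup.orderOf_xa]; revert i; decide

theorem not_exists_section_toQuaternion :
    ¬∃ s : QuaternionGroup 2 →* InvSemidirectZ4, ∀ q, toQuaternion (s q) = q := by
  rintro ⟨s, hs⟩
  have lifts_sq_ne : ∀ u v, toQuaternion u = .a 1 → toQuaternion v = .xa 0 → u ^ 2 ≠ v ^ 2 := by
    decide
  apply lifts_sq_ne _ _ (hs (.a 1)) (hs (.xa 0))
  rw [← map_pow, ← map_pow, QuaternionGroup.a_one_pow, QuaternionGroup.xa_sq]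

end InvSemidirectZ4

open InvSemidirectZ4 in
theorem stmt_16 :
    ∃ (𝒢 : Type) (_ : Group 𝒢) (_ : Fintype 𝒢) (π : 𝒢 →* QuaternionGroup 2),
      Function.Surjective π ∧ Nat.card (MonoidHom.ker π) = 2 ∧
      MonoidHom.ker π ≤ Subgroup.center 𝒢 ∧
      ¬(∃ s : QuaternionGroup 2 →* 𝒢, ∀ g, π (s g) = g) ∧
      (∀ H : Subgroup (QuaternionGroup 2), IsCyclic H →
        ∃ t : H →* 𝒢, ∀ x : H, π (t x) = (x : QuaternionGroup 2)) ∧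
      (∃ a b : 𝒢, orderOf a = 4 ∧ orderOf b = 4 ∧ b * a * b⁻¹ = a⁻¹ ∧
        Nat.card 𝒢 = 16 ∧ Subgroup.closure {a, b} = ⊤) := by
  refine ⟨InvSemidirectZ4, inferInstance, inferInstance, toQuaternion,
    fun q => (exists_toQuaternion_eq_pow_orderOf_eq_one q).imp fun _ h => h.1,
    card_ker_toQuaternion, ker_toQuaternion_le_center, not_exists_section_toQuaternion,
    fun H hH => exists_section_of_isCyclic _ H hH exists_toQuaternion_eq_pow_orderOf_eq_one,
    a, b, orderOf_a, orderOf_b, b_mul_a_mul_b_inv, card_eq, closure_pair_a_b_eq_top⟩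
end

section
/- Z/4 ⋊ Z/4, where the generator of the second factor acts on the first by inversion, has a central subgroup Z of order 2 such that (Z/4 ⋊ Z/4)/Z ≅ Q₈ and the extension 1 → Z → Z/4 ⋊ Z/4 → Q₈ → 1 does not split. -/
namespace Stmt17Aux

open Subgroup

section Abstract

variable {G : Type*} [Group G] {x y : G}

lemma conj_zpow_of_rel (h : y * x * y⁻¹ = x⁻¹) (m : ℤ) :
    y * x ^ m * y⁻¹ = x ^ (-m) := by
  rw [← conj_zpow, h, inv_zpow, zpow_neg]

lemma conj_zpow_of_rel' (h : y * x * y⁻¹ = x⁻¹) (m : ℤ) :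
    y⁻¹ * x ^ m * y = x ^ (-m) := by
  have h' : y⁻¹ * x * y⁻¹⁻¹ = x⁻¹ := by
    have := congrArg (fun t => y⁻¹ * t⁻¹ * y) h
    simpa [mul_assoc] using this.symm
  simpa using conj_zpow_of_rel h' m

lemma shift_rel (h : y * x * y⁻¹ = x⁻¹) (n : ℤ) :
    ∀ m : ℤ, ∃ k : ℤ, y ^ n * x ^ m = x ^ k * y ^ n := by
  induction n using Int.induction_on with
  | zero => intro m; exact ⟨m, by simp⟩
  | succ n ih =>
    intro m
    obtain ⟨k, hk⟩ := ih (-m)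
    refine ⟨k, ?_⟩
    have h1 : y * x ^ m = x ^ (-m) * y := by
      have := conj_zpow_of_rel h m
      rw [← this]; group
    calc y ^ (n + 1 : ℤ) * x ^ m = y ^ (n : ℤ) * (y * x ^ m) := by
          rw [zpow_add, zpow_one, mul_assoc]
      _ = y ^ (n : ℤ) * (x ^ (-m) * y) := by rw [h1]
      _ = (y ^ (n : ℤ) * x ^ (-m)) * y := by rw [mul_assoc]
      _ = (x ^ k * y ^ (n : ℤ)) * y := by rw [hk]
      _ = x ^ k * y ^ (n + 1 : ℤ) := by rw [zpow_add, zpow_one, mul_assoc]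
  | pred n ih =>
    intro m
    obtain ⟨k, hk⟩ := ih (-m)
    refine ⟨k, ?_⟩
    have h1 : y⁻¹ * x ^ m = x ^ (-m) * y⁻¹ := by
      have := conj_zpow_of_rel' h m
      rw [← this]; group
    calc y ^ (-n - 1 : ℤ) * x ^ m = y ^ (-n : ℤ) * (y⁻¹ * x ^ m) := by
          rw [sub_eq_add_neg, zpow_add, zpow_neg_one, mul_assoc]
      _ = y ^ (-n : ℤ) * (x ^ (-m) * y⁻¹) := by rw [h1]
      _ = (y ^ (-n : ℤ) * x ^ (-m)) * y⁻¹ := by rw [mul_assoc]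
      _ = (x ^ k * y ^ (-n : ℤ)) * y⁻¹ := by rw [hk]
      _ = x ^ k * y ^ (-n - 1 : ℤ) := by
          rw [sub_eq_add_neg, zpow_add, zpow_neg_one, mul_assoc]

lemma zpow_eq_val_pow (hx : x ^ (4 : ℕ) = 1) (m : ℤ) :
    x ^ m = x ^ (ZMod.val (m : ZMod 4)) := by
  have h4 : x ^ (4 : ℤ) = 1 := by exact_mod_cast hx
  have hm : m = 4 * (m / 4) + m % 4 := (Int.mul_ediv_add_emod m 4).symm
  have hv : ((ZMod.val (m : ZMod 4) : ℕ) : ℤ) = m % 4 := ZMod.val_intCast m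
  calc x ^ m = x ^ (4 * (m / 4) + m % 4) := by rw [← hm]
    _ = (x ^ (4 : ℤ)) ^ (m / 4) * x ^ (m % 4) := by rw [zpow_add, zpow_mul]
    _ = x ^ (m % 4) := by rw [h4]; simp
    _ = x ^ ((ZMod.val (m : ZMod 4) : ℕ) : ℤ) := by rw [hv]
    _ = x ^ (ZMod.val (m : ZMod 4)) := zpow_natCast x _

end Abstract

/-- Relators of `ℤ/4 ⋊ ℤ/4` with inversion action. -/
def rels : Set (FreeGroup (Fin 2)) :=
  {FreeGroup.of 0 ^ 4, FreeGroup.of 1 ^ 4,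
    FreeGroup.of 1 * FreeGroup.of 0 * (FreeGroup.of 1)⁻¹ * FreeGroup.of 0}

abbrev G0 := PresentedGroup rels

def X : G0 := PresentedGroup.of 0
def Y : G0 := PresentedGroup.of 1

lemma mk_eq_one {r : FreeGroup (Fin 2)} (h : r ∈ rels) :
    PresentedGroup.mk rels r = 1 :=
  (QuotientGroup.eq_one_iff r).mpr (Subgroup.subset_normalClosure h)

lemma X_pow_four : X ^ (4 : ℕ) = 1 := by
  have := mk_eq_one (r := FreeGroup.of 0 ^ 4) (by simp [rels])
  simpa [X, PresentedGroup.of, map_pow] using this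

lemma Y_pow_four : Y ^ (4 : ℕ) = 1 := by
  have := mk_eq_one (r := FreeGroup.of 1 ^ 4) (by simp [rels])
  simpa [Y, PresentedGroup.of, map_pow] using this

lemma XY_rel : Y * X * Y⁻¹ = X⁻¹ := by
  have h0 := mk_eq_one
    (r := FreeGroup.of 1 * FreeGroup.of 0 * (FreeGroup.of 1)⁻¹ * FreeGroup.of 0)
    (by simp [rels])
  have h : Y * X * Y⁻¹ * X = 1 := by
    simpa [X, Y, PresentedGroup.of, map_mul, map_inv] using h0
  exact eq_inv_of_mul_eq_one_left h

/-- Every element of `G0` has the normal form `X^m * Y^n`. -/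
lemma exists_rep (g : G0) : ∃ m n : ℤ, g = X ^ m * Y ^ n := by
  let H : Subgroup G0 :=
    { carrier := {g | ∃ m n : ℤ, g = X ^ m * Y ^ n}
      one_mem' := ⟨0, 0, by simp⟩
      mul_mem' := by
        rintro g₁ g₂ ⟨m, n, rfl⟩ ⟨p, q, rfl⟩
        obtain ⟨k, hk⟩ := shift_rel XY_rel n p
        refine ⟨m + k, n + q, ?_⟩
        calc X ^ m * Y ^ n * (X ^ p * Y ^ q)
            = X ^ m * (Y ^ n * X ^ p) * Y ^ q := by group
          _ = X ^ m * (X ^ k * Y ^ n) * Y ^ q := by rw [hk]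
          _ = X ^ (m + k) * Y ^ (n + q) := by rw [zpow_add, zpow_add]; group
      inv_mem' := by
        rintro g ⟨m, n, rfl⟩
        obtain ⟨k, hk⟩ := shift_rel XY_rel (-n) (-m)
        refine ⟨k, -n, ?_⟩
        calc (X ^ m * Y ^ n)⁻¹ = Y ^ (-n : ℤ) * X ^ (-m : ℤ) := by group
          _ = X ^ k * Y ^ (-n : ℤ) := hk }
  exact PresentedGroup.generated_by rels H
    (by
      intro j
      fin_cases j
      · exact ⟨1, 0, by simp [X]⟩
      · exact ⟨0, 1, by simp [Y]⟩) g

def nf : ZMod 4 × ZMod 4 → G0 := fun p => X ^ p.1.val * Y ^ p.2.val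

lemma nf_surjective : Function.Surjective nf := by
  intro g
  obtain ⟨m, n, rfl⟩ := exists_rep g
  refine ⟨((m : ZMod 4), (n : ZMod 4)), ?_⟩
  simp only [nf]
  rw [← zpow_eq_val_pow X_pow_four m, ← zpow_eq_val_pow Y_pow_four n]

instance : Finite G0 := Finite.of_surjective nf nf_surjective

lemma card_G0_le : Nat.card G0 ≤ 16 := by
  have := Nat.card_le_card_of_surjective nf nf_surjective
  simpa using this

/-- The homomorphism to the quaternion group. -/
def ρ : G0 →* QuaternionGroup 2 :=
  PresentedGroup.toGroup (f := ![QuaternionGroup.a 1, QuaternionGroup.xa 0])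
    (by
      intro r hr
      rcases hr with h | h | h <;> subst h <;>
        simp only [map_mul, map_pow, map_inv, FreeGroup.lift_apply_of,
          Matrix.cons_val_zero, Matrix.cons_val_one, Matrix.head_cons] <;> decide)

lemma ρ_X : ρ X = QuaternionGroup.a 1 := PresentedGroup.toGroup.of _
lemma ρ_Y : ρ Y = QuaternionGroup.xa 0 := PresentedGroup.toGroup.of _

lemma ρ_surjective : Function.Surjective ρ := by
  intro q
  rcases q with i | i
  · refine ⟨X ^ (i.val), ?_⟩
    rw [map_pow, ρ_X, QuaternionGroup.a_one_pow]
    congr 1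
    simp [ZMod.natCast_val, ZMod.cast_id]
  · refine ⟨X ^ ((-i).val) * Y, ?_⟩
    rw [map_mul, map_pow, ρ_X, ρ_Y, QuaternionGroup.a_one_pow]
    have h1 : ((((-i).val : ℕ)) : ZMod (2 * 2)) = -i := by
      simp [ZMod.natCast_val, ZMod.cast_id]
    rw [h1]
    show QuaternionGroup.xa (0 - -i) = QuaternionGroup.xa i
    norm_num

/-- The homomorphism to the dihedral group, used to separate `a^2` from `b^2`. -/
def δ : G0 →* DihedralGroup 4 :=
  PresentedGroup.toGroup (f := ![DihedralGroup.r 1, DihedralGroup.sr 0])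
    (by
      intro r hr
      rcases hr with h | h | h <;> subst h <;>
        simp only [map_mul, map_pow, map_inv, FreeGroup.lift_apply_of,
          Matrix.cons_val_zero, Matrix.cons_val_one, Matrix.head_cons] <;> decide)

lemma δ_X : δ X = DihedralGroup.r 1 := PresentedGroup.toGroup.of _
lemma δ_Y : δ Y = DihedralGroup.sr 0 := PresentedGroup.toGroup.of _

end Stmt17Aux

open Stmt17Aux Subgroup

/-- `𝒢` together with `a`, `b` as below is (isomorphic to) the semidirect product
`ℤ/4 ⋊ ℤ/4` where the generator `b` of the second factor acts on the first factor
`⟨a⟩` by inversion. -/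
theorem stmt_17 (𝒢 : Type*) [Group 𝒢] [Fintype 𝒢] (a b : 𝒢)
    (ha : orderOf a = 4) (hb : orderOf b = 4) (hrel : b * a * b⁻¹ = a⁻¹)
    (hcard : Nat.card 𝒢 = 16) (hgen : Subgroup.closure {a, b} = ⊤) :
    ∃ Z : Subgroup 𝒢, Z ≤ Subgroup.center 𝒢 ∧ Nat.card Z = 2 ∧
      ∃ π : 𝒢 →* QuaternionGroup 2, Function.Surjective π ∧ MonoidHom.ker π = Z ∧
        ¬∃ s : QuaternionGroup 2 →* 𝒢, ∀ g, π (s g) = g := by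
  have ha4 : a ^ (4 : ℕ) = 1 := ha ▸ pow_orderOf_eq_one a
  have hb4 : b ^ (4 : ℕ) = 1 := hb ▸ pow_orderOf_eq_one b
  -- the homomorphism from the presented group onto 𝒢
  have hf : ∀ r ∈ rels, FreeGroup.lift ![a, b] r = 1 := by
    intro r hr
    rcases hr with h | h | h <;> subst h <;>
      simp only [map_mul, map_pow, map_inv, FreeGroup.lift_apply_of,
        Matrix.cons_val_zero, Matrix.cons_val_one, Matrix.head_cons]
    · exact ha4
    · exact hb4
    · rw [hrel]; group
  let θ : G0 →* 𝒢 := PresentedGroup.toGroup hf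
  have θX : θ X = a := PresentedGroup.toGroup.of hf
  have θY : θ Y = b := PresentedGroup.toGroup.of hf
  have θsurj : Function.Surjective θ := by
    rw [← MonoidHom.range_eq_top]
    rw [eq_top_iff, ← hgen, Subgroup.closure_le]
    rintro x (rfl | rfl)
    · exact ⟨X, θX⟩
    · exact ⟨Y, θY⟩
  have hcards : Nat.card G0 = Nat.card 𝒢 := by
    have h1 : Nat.card 𝒢 ≤ Nat.card G0 := Nat.card_le_card_of_surjective θ θsurj
    have h2 : Nat.card G0 ≤ Nat.card 𝒢 := hcard ▸ card_G0_le
    omega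
  have θbij : Function.Bijective θ :=
    (Nat.bijective_iff_surjective_and_card θ).mpr ⟨θsurj, hcards⟩
  let e : G0 ≃* 𝒢 := MulEquiv.ofBijective θ θbij
  have esymm_a : e.symm a = X := by
    rw [MulEquiv.symm_apply_eq]; exact θX.symm
  have esymm_b : e.symm b = Y := by
    rw [MulEquiv.symm_apply_eq]; exact θY.symm
  -- commutation facts in 𝒢
  have hba : ∀ m : ℤ, b * a ^ m * b⁻¹ = a ^ (-m) := conj_zpow_of_rel hrel
  have hab2 : b ^ 2 * a = a * b ^ 2 := by
    have h2 : b * a⁻¹ * b⁻¹ = a := by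
      have := congrArg (·⁻¹) hrel
      simpa [mul_assoc] using this
    calc b ^ 2 * a = b * (b * a * b⁻¹) * b := by rw [pow_two]; group
      _ = b * a⁻¹ * b := by rw [hrel]
      _ = (b * a⁻¹ * b⁻¹) * b ^ 2 := by rw [pow_two]; group
      _ = a * b ^ 2 := by rw [h2]
  have hab2sq : b ^ 2 * a ^ 2 = a ^ 2 * b ^ 2 := by
    calc b ^ 2 * a ^ 2 = (b ^ 2 * a) * a := by rw [pow_two a]; group
      _ = (a * b ^ 2) * a := by rw [hab2]
      _ = a * (b ^ 2 * a) := by group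
      _ = a * (a * b ^ 2) := by rw [hab2]
      _ = a ^ 2 * b ^ 2 := by rw [pow_two a]; group
  have hba2 : b * a ^ 2 * b⁻¹ = a ^ 2 := by
    have h1 : b * a ^ (2 : ℤ) * b⁻¹ = a ^ (-2 : ℤ) := hba 2
    have hinv2 : (a ^ (2 : ℕ))⁻¹ = a ^ (2 : ℕ) :=
      inv_eq_of_mul_eq_one_left (by rw [← pow_add]; exact ha4)
    have h2 : a ^ (-2 : ℤ) = a ^ (2 : ℕ) := by
      rw [zpow_neg, show ((2 : ℤ)) = ((2 : ℕ) : ℤ) from rfl, zpow_natCast, hinv2]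
    calc b * a ^ 2 * b⁻¹ = b * a ^ (2 : ℤ) * b⁻¹ := by norm_cast
      _ = a ^ (-2 : ℤ) := h1
      _ = a ^ (2 : ℕ) := h2
  -- the central element
  set z : 𝒢 := a ^ 2 * b ^ 2 with hz
  have hcomm : b * a ^ 2 = a ^ 2 * b := mul_inv_eq_iff_eq_mul.mp hba2
  have h3a : a ^ 2 * a = a * a ^ 2 := by rw [pow_two, mul_assoc]
  have h3b : b ^ 2 * b = b * b ^ 2 := by rw [pow_two, mul_assoc]
  have hza : z * a = a * z := by
    rw [hz]
    calc a ^ 2 * b ^ 2 * a = a ^ 2 * (b ^ 2 * a) := mul_assoc _ _ _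
      _ = a ^ 2 * (a * b ^ 2) := by rw [hab2]
      _ = (a ^ 2 * a) * b ^ 2 := (mul_assoc _ _ _).symm
      _ = (a * a ^ 2) * b ^ 2 := by rw [h3a]
      _ = a * (a ^ 2 * b ^ 2) := mul_assoc _ _ _
  have hzb : z * b = b * z := by
    rw [hz]
    calc a ^ 2 * b ^ 2 * b = a ^ 2 * (b ^ 2 * b) := mul_assoc _ _ _
      _ = a ^ 2 * (b * b ^ 2) := by rw [h3b]
      _ = (a ^ 2 * b) * b ^ 2 := (mul_assoc _ _ _).symm
      _ = (b * a ^ 2) * b ^ 2 := by rw [← hcomm]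
      _ = b * (a ^ 2 * b ^ 2) := mul_assoc _ _ _
  have hz_central : ∀ g : 𝒢, g * z = z * g := by
    have hamem : a ∈ Subgroup.centralizer {z} :=
      Subgroup.mem_centralizer_iff.mpr (by rintro h rfl; exact hza)
    have hbmem : b ∈ Subgroup.centralizer {z} :=
      Subgroup.mem_centralizer_iff.mpr (by rintro h rfl; exact hzb)
    have hsub : Subgroup.closure {a, b} ≤ Subgroup.centralizer {z} := by
      rw [Subgroup.closure_le]
      rintro x (rfl | rfl)
      · exact hamem
      · exact hbmem
    intro g
    have hg : g ∈ Subgroup.centralizer {z} := hsub (hgen ▸ Subgroup.mem_top g)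
    exact (Subgroup.mem_centralizer_iff.mp hg z rfl).symm
  have hz_sq : z ^ 2 = 1 := by
    calc z ^ 2 = a ^ 2 * (b ^ 2 * a ^ 2) * b ^ 2 := by
          rw [hz, pow_two]; simp only [mul_assoc]
      _ = a ^ 2 * (a ^ 2 * b ^ 2) * b ^ 2 := by rw [hab2sq]
      _ = a ^ 4 * b ^ 4 := by
          rw [show (4 : ℕ) = 2 + 2 from rfl, pow_add, pow_add]
          simp only [mul_assoc]
      _ = 1 := by rw [ha4, hb4, one_mul]
  have hab_ne : a ^ 2 ≠ b ^ 2 := by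
    intro h
    have h2 : δ (e.symm (a ^ 2)) = δ (e.symm (b ^ 2)) := by rw [h]
    simp only [map_pow, esymm_a, esymm_b, δ_X, δ_Y] at h2
    revert h2; decide
  have hz_ne : z ≠ 1 := by
    intro h
    apply hab_ne
    have h1 : a ^ 2 * b ^ 2 = 1 := h
    have h2 : a ^ 2 = (b ^ 2)⁻¹ := eq_inv_of_mul_eq_one_left h1
    have h3 : (b ^ 2)⁻¹ = b ^ 2 :=
      inv_eq_of_mul_eq_one_left (by rw [← pow_add]; exact hb4)
    rw [h2, h3]
  have hz_ord : orderOf z = 2 := orderOf_eq_prime hz_sq hz_ne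
  -- the projection
  let π : 𝒢 →* QuaternionGroup 2 := ρ.comp e.symm.toMonoidHom
  have πa : π a = QuaternionGroup.a 1 := by
    show ρ (e.symm a) = _
    rw [esymm_a, ρ_X]
  have πb : π b = QuaternionGroup.xa 0 := by
    show ρ (e.symm b) = _
    rw [esymm_b, ρ_Y]
  have πsurj : Function.Surjective π := by
    intro q
    obtain ⟨g, hg⟩ := ρ_surjective q
    exact ⟨e g, by simpa [π] using hg⟩
  have hker : MonoidHom.ker π = Subgroup.zpowers z := by
    have hzker : z ∈ MonoidHom.ker π := by
      rw [MonoidHom.mem_ker, hz, map_mul, map_pow, map_pow, πa, πb]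
      decide
    have hle : Subgroup.zpowers z ≤ MonoidHom.ker π :=
      Subgroup.zpowers_le.mpr hzker
    have hcardker : Nat.card (MonoidHom.ker π) = 2 := by
      have h1 : Nat.card 𝒢 =
          Nat.card (𝒢 ⧸ MonoidHom.ker π) * Nat.card (MonoidHom.ker π) :=
        Subgroup.card_eq_card_quotient_mul_card_subgroup _
      have h2 : Nat.card (𝒢 ⧸ MonoidHom.ker π) = 8 := by
        rw [Nat.card_congr (QuotientGroup.quotientKerEquivOfSurjective π πsurj).toEquiv]
        rw [Nat.card_eq_fintype_card, QuaternionGroup.card]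
      rw [hcard, h2] at h1
      omega
    refine (Subgroup.eq_of_le_of_card_ge hle ?_).symm
    rw [hcardker, Nat.card_zpowers, hz_ord]
  refine ⟨Subgroup.zpowers z, ?_, ?_, π, πsurj, hker, ?_⟩
  · intro g hg
    obtain ⟨k, rfl⟩ := hg
    rw [Subgroup.mem_center_iff]
    intro h
    exact Commute.zpow_right (hz_central h) k
  · rw [Nat.card_zpowers, hz_ord]
  · -- non-splitting
    rintro ⟨s, hs⟩
    -- preimage of `a 1`
    have key : ∀ w q : 𝒢, π w = π q → w ^ 2 = q ^ 2 := by
      intro w q hpq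
      have hmem : q⁻¹ * w ∈ MonoidHom.ker π := by
        rw [MonoidHom.mem_ker, map_mul, map_inv, hpq]
        group
      rw [hker] at hmem
      obtain ⟨k, hk⟩ := hmem
      have hw : w = q * z ^ k := by
        rw [show z ^ k = q⁻¹ * w from hk, ← mul_assoc, mul_inv_cancel, one_mul]
      have hcz : q * z ^ k = z ^ k * q := Commute.zpow_right (hz_central q) k
      have hzk2 : (z ^ k) ^ 2 = 1 := by
        have h1 : (z ^ k) ^ (2 : ℕ) = z ^ (k * 2) := by
          rw [← zpow_natCast (z ^ k) 2, ← zpow_mul]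
          norm_num
        rw [h1, mul_comm, zpow_mul, show ((2 : ℤ)) = ((2 : ℕ) : ℤ) from rfl,
          zpow_natCast, hz_sq, one_zpow]
      calc w ^ 2 = (q * z ^ k) * (q * z ^ k) := by rw [pow_two, hw]
        _ = q * (z ^ k * q) * z ^ k := by simp only [mul_assoc]
        _ = q * (q * z ^ k) * z ^ k := by rw [← hcz]
        _ = (q * q) * (z ^ k * z ^ k) := by simp only [mul_assoc]
        _ = q ^ 2 * (z ^ k) ^ 2 := by rw [pow_two, pow_two]
        _ = q ^ 2 := by rw [hzk2, mul_one]
    have hu : π (s (QuaternionGroup.a 1)) = π a := by rw [hs, πa]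
    have hv : π (s (QuaternionGroup.xa 0)) = π b := by rw [hs, πb]
    have hu2 : s (QuaternionGroup.a 1) ^ 2 = a ^ 2 := key _ _ hu
    have hv2 : s (QuaternionGroup.xa 0) ^ 2 = b ^ 2 := key _ _ hv
    apply hab_ne
    have hQ : (QuaternionGroup.a 1 : QuaternionGroup 2) ^ 2
        = (QuaternionGroup.xa 0 : QuaternionGroup 2) ^ 2 := by decide
    calc a ^ 2 = s (QuaternionGroup.a 1) ^ 2 := hu2.symm
      _ = s ((QuaternionGroup.a 1 : QuaternionGroup 2) ^ 2) := (map_pow s _ 2).symm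
      _ = s ((QuaternionGroup.xa 0 : QuaternionGroup 2) ^ 2) := by rw [hQ]
      _ = s (QuaternionGroup.xa 0) ^ 2 := map_pow s _ 2
      _ = b ^ 2 := hv2
end
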